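/- arXiv:1205.3587 — 2 statements merged into one kernel-verified Lean document; each statement's English description precedes it below -/
import Mathlib

section
/- Let G be a left brace with λ_a(a) = a for all a ∈ G. Then the associated radical ring (G,+,*) with a*b = ab - a - b is anticommutative (a*b = -(b*a) and a*a = 0), G*G lies in the center of this ring, and consequently the multiplicative group of G is nilpotent of class at most 2. -/
class LeftBrace (G : Type*) [AddCommGroup G] [Group G] : Prop where
  left_compat : ∀ a b c : G, a * (b + c) + a = a * b + a * c

section Aux

variable {G : Type*} [AddCommGroup G] [Group G] [LeftBrace G]

private lemma cancel_aux {A : Type*} [AddCommGroup A] {x y u v : A}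
    (h : u = v) (k : x - y = u - v) : x = y := by
  rw [h, sub_self, sub_eq_zero] at k; exact k

private lemma cancel_aux2 {A : Type*} [AddCommGroup A] {x y u v u' v' : A}
    (h : u = v) (h' : u' = v') (k : x - y = (u - v) + (u' - v')) : x = y := by
  rw [h, h', sub_self, sub_self, add_zero, sub_eq_zero] at k; exact k

/-- The star product of the brace. -/
def bstar (a b : G) : G := a * b - a - b

lemma lb (a b c : G) : a * (b + c) = a * b + a * c - a :=
  eq_sub_of_add_eq (LeftBrace.left_compat a b c)

lemma mz (a : G) : a * (0 : G) = a := by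
  have h := lb a 0 0
  rw [add_zero] at h
  exact cancel_aux h.symm (by abel)

lemma zeq : (0 : G) = 1 := by
  have := mz (1 : G); rwa [one_mul] at this

lemma zmul (a : G) : (0 : G) * a = a := by rw [zeq, one_mul]

lemma mneg (a b : G) : a * (-b) = a + a - a * b := by
  have h := lb a b (-b)
  rw [add_neg_cancel, mz] at h
  exact cancel_aux h.symm (by abel)

lemma neg_eq_inv (hsf : ∀ a : G, a * a = a + a) (a : G) : -a = a⁻¹ := by
  have h1 : a * (a⁻¹ + a⁻¹) = a⁻¹ := by
    rw [← hsf a⁻¹, ← mul_assoc, mul_inv_cancel, one_mul]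
  have h2 : a * (a⁻¹ + a⁻¹) = (1 : G) + 1 - a := by
    rw [lb, mul_inv_cancel]
  rw [h1, ← zeq, add_zero, zero_sub] at h2
  exact h2.symm

lemma L5a (hsf : ∀ a : G, a * a = a + a) (a b : G) :
    b * (a * b) = a + (b + b) := by
  apply mul_left_cancel (a := a)
  rw [← mul_assoc, hsf (a * b), lb a a (b + b), hsf a, lb a b b]
  abel

lemma L5 (hsf : ∀ a : G, a * a = a + a) (a b : G) :
    a * b = b⁻¹ * a + (b + b) := by
  have h := L5a hsf (b⁻¹ * a) b
  rwa [← mul_assoc, ← mul_assoc, mul_inv_cancel, one_mul] at h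

lemma L6 (hsf : ∀ a : G, a * a = a + a) (a b : G) :
    bstar a b = bstar (-b) a := by
  show a * b - a - b = (-b) * a - (-b) - a
  rw [show ((-b) * a : G) = b⁻¹ * a from by rw [neg_eq_inv hsf], L5 hsf a b]
  abel

lemma L3' (a b : G) : bstar a (-b) = -(bstar a b) := by
  show a * (-b) - a - (-b) = -(a * b - a - b)
  rw [mneg]; abel

lemma L7 (hsf : ∀ a : G, a * a = a + a) (a b : G) :
    bstar a b = -(bstar b a) := by
  calc bstar a b = bstar (-b) a := L6 hsf a b
    _ = bstar (-a) (-b) := L6 hsf (-b) a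
    _ = -(bstar (-a) b) := L3' (-a) b
    _ = -(bstar b a) := by rw [← L6 hsf b a]

lemma L2' (a b c : G) : bstar a (b + c) = bstar a b + bstar a c := by
  show a * (b + c) - a - (b + c) = (a * b - a - b) + (a * c - a - c)
  rw [lb]; abel

lemma bstar_zero (a : G) : bstar a 0 = 0 := by
  show a * 0 - a - 0 = 0
  rw [mz]; abel

lemma zero_bstar (a : G) : bstar 0 a = 0 := by
  show (0 : G) * a - 0 - a = 0
  rw [zmul]; abel

lemma L8 (hsf : ∀ a : G, a * a = a + a) (a b c : G) :
    bstar (a + b) c = bstar a c + bstar b c := by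
  rw [L6 hsf (a + b) c, L2', ← L6 hsf a c, ← L6 hsf b c]

lemma neg_bstar (hsf : ∀ a : G, a * a = a + a) (a b : G) :
    bstar (-a) b = -(bstar a b) := by
  have h := L8 hsf a (-a) b
  rw [add_neg_cancel, zero_bstar] at h
  exact cancel_aux h.symm (by abel)

lemma mul_expand (a b : G) : a * b = a + b + bstar a b := by
  show a * b = a + b + (a * b - a - b); abel

lemma L9 (hsf : ∀ a : G, a * a = a + a) (a b c : G) :
    bstar (bstar a b) c = bstar a (bstar b c) := by
  have i : bstar (a * b) c = bstar a c + bstar b c + bstar (bstar a b) c := by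
    rw [mul_expand a b, L8 hsf, L8 hsf]
  have ii : bstar a (b * c) = bstar a b + bstar a c + bstar a (bstar b c) := by
    rw [mul_expand b c, L2', L2']
  have iii : bstar (a * b) c = bstar a (b * c) + bstar b c - bstar a b := by
    show (a * b) * c - a * b - c
      = (a * (b * c) - a - b * c) + (b * c - b - c) - (a * b - a - b)
    rw [mul_assoc]; abel
  rw [i, ii] at iii
  exact cancel_aux iii (by abel)

lemma L10 (hsf : ∀ a : G, a * a = a + a) (a b x : G) :
    bstar (bstar a b) x = bstar x (bstar a b) := by
  calc bstar (bstar a b) x = bstar a (bstar b x) := L9 hsf a b x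
    _ = -(bstar (bstar b x) a) := L7 hsf _ _
    _ = -(bstar b (bstar x a)) := by rw [L9 hsf]
    _ = bstar (bstar x a) b := (L7 hsf (bstar x a) b).symm
    _ = bstar x (bstar a b) := L9 hsf x a b

lemma bstar_self (hsf : ∀ a : G, a * a = a + a) (a : G) : bstar a a = 0 := by
  show a * a - a - a = 0
  rw [hsf]; abel

lemma bstar_sub_left (hsf : ∀ a : G, a * a = a + a) (a b c : G) :
    bstar (a - b) c = bstar a c - bstar b c := by
  rw [sub_eq_add_neg, L8 hsf, neg_bstar hsf]; abel

lemma bstar_sub_right (a b c : G) :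
    bstar a (b - c) = bstar a b - bstar a c := by
  rw [sub_eq_add_neg, L2', L3']; abel

end Aux

open scoped commutatorElement

/-- Let `G` be a left brace with `λ_a(a) = a` for all `a ∈ G` and let
`a * b := ab - a - b` be the multiplication of the associated radical ring.
Then this ring is anticommutative (`a*b = -(b*a)` and `a*a = 0`), all products
`a*b` are central in the ring, and consequently the multiplicative group of `G`
is nilpotent of class at most `2` (all double commutators are trivial). -/
theorem squareFree_brace_anticommutative_center_nilpotent (G : Type*)
    [AddCommGroup G] [Group G] [LeftBrace G]
    (hsf : ∀ a : G, a * a = a + a) :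
    let star : G → G → G := fun a b => a * b - a - b
    (∀ a b : G, star a b = -(star b a)) ∧
    (∀ a : G, star a a = 0) ∧
    (∀ a b x : G, star (star a b) x = star x (star a b)) ∧
    (∀ a b c : G, ⁅⁅a, b⁆, c⁆ = 1) := by
  intro star
  have hst : ∀ a b : G, star a b = bstar a b := fun a b => rfl
  refine ⟨fun a b => L7 hsf a b, fun a => bstar_self hsf a,
    fun a b x => L10 hsf a b x, fun a b c => ?_⟩
  -- the commutator part
  set t : G := ⁅a, b⁆ with ht
  set s : G := bstar a b with hs
  set z : G := s + s with hz
  set w : G := b * a with hw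
  have h1 : t * w = a * b := by rw [ht, hw]; group
  have h2 : t + w + bstar t w = a * b := by rw [← mul_expand t w, h1]
  have h3 : w = a + b - s := by
    rw [hw, mul_expand b a, hs, L7 hsf b a]; abel
  have h4 : t + bstar t w = z := by
    have hab : a * b = a + b + s := mul_expand a b
    refine cancel_aux2 h2 h3.symm ?_
    rw [hab, hz]; abel
  have hww : bstar w w = 0 := bstar_self hsf w
  have t_eq : t = z - bstar t w := eq_sub_of_add_eq h4
  have h6 : bstar t w = bstar z w := by
    calc bstar t w = bstar (z - bstar t w) w := by rw [← t_eq]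
      _ = bstar z w - bstar (bstar t w) w := bstar_sub_left hsf _ _ _
      _ = bstar z w - bstar t (bstar w w) := by rw [L9 hsf]
      _ = bstar z w := by rw [hww, bstar_zero, sub_zero]
  have t_eq2 : t = z - bstar z w := by rw [← h6]; exact t_eq
  have central : ∀ x : G, bstar t x = bstar x t := by
    intro x
    have c1 : bstar z x = bstar x z := by
      rw [hz, L8 hsf, L2', hs, L10 hsf a b x]
    have c2 : bstar (bstar z w) x = bstar x (bstar z w) := by
      have hzw : bstar z w = bstar s w + bstar s w := by rw [hz, L8 hsf]
      rw [hzw, L8 hsf, L2', hs, L10 hsf (bstar a b) w x]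
    rw [t_eq2, bstar_sub_left hsf, bstar_sub_right, c1, c2]
  have hcomm : t * c = c * t := by
    have h := central c
    exact cancel_aux h (by show t * c - c * t = (t * c - t - c) - (c * t - c - t); abel)
  exact commutatorElement_eq_one_iff_mul_comm.mpr hcomm
end

section
/- Let G be a left brace with λ_a(a) = a for all a ∈ G, and suppose a,b ∈ G commute multiplicatively (ab = ba). Then 2(a+b) = 2(ab); in particular, if both a and b have odd (finite) multiplicative order and generate odd-order elements, one gets a+b = ab. -/
section Aux

variable {G : Type*} [AddCommGroup G] [Group G] [LeftBrace G]

private lemma cancel_aux_s17 {H : Type*} [AddCommGroup H] {A B C D : H}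
    (h : A = B) (h2 : C - D = A - B) : C = D := by
  rw [h, sub_self] at h2
  exact sub_eq_zero.mp h2

private lemma lb_mul_zero (x : G) : x * 0 = x := by
  have h := LeftBrace.left_compat x 0 0
  rw [add_zero] at h
  exact (add_left_cancel h).symm

private lemma lb_one_eq_zero : (1 : G) = 0 := by
  have h := lb_mul_zero (1 : G)
  rw [one_mul] at h
  exact h.symm

private lemma lb_mul_neg (x y : G) : x * (-y) = x + x - x * y := by
  have h := LeftBrace.left_compat x y (-y)
  rw [add_neg_cancel, lb_mul_zero] at h
  rw [eq_sub_iff_add_eq, add_comm]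
  exact h.symm

private lemma lb_inv_eq_neg (hsf : ∀ a : G, a * a = a + a) (x : G) : x⁻¹ = -x := by
  have h2 : x * (x⁻¹ * x⁻¹) = x⁻¹ := by
    rw [← mul_assoc, mul_inv_cancel, one_mul]
  have h1 : x * (x⁻¹ * x⁻¹) = -x := by
    rw [hsf x⁻¹]
    have h := LeftBrace.left_compat x x⁻¹ x⁻¹
    rw [mul_inv_cancel, lb_one_eq_zero, add_zero] at h
    exact eq_neg_of_add_eq_zero_left h
  exact h2.symm.trans h1

private lemma lb_inv_mul (hsf : ∀ a : G, a * a = a + a) (x y : G)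
    (hxy : x * y = y * x) : x⁻¹ * y = x * y - x - x := by
  have h1 : x⁻¹ * y⁻¹ = -(x * y) := by
    rw [← mul_inv_rev, ← hxy, lb_inv_eq_neg hsf]
  have h2 : x⁻¹ * y⁻¹ = -x + -x - x⁻¹ * y := by
    rw [lb_inv_eq_neg hsf y, lb_mul_neg, lb_inv_eq_neg hsf x]
  have h3 : -(x * y) = -x + -x - x⁻¹ * y := h1.symm.trans h2
  exact cancel_aux_s17 h3 (by abel)

private lemma lb_key (hsf : ∀ a : G, a * a = a + a) (x y : G)
    (hxy : x * y = y * x) : x * (x * y) = y + x + x := by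
  have hc : x * (x * y) = (x * y) * x := by
    conv_lhs => rw [hxy]
    rw [← mul_assoc]
  have h := lb_inv_mul hsf x (x * y) hc
  rw [inv_mul_cancel_left] at h
  exact cancel_aux_s17 h.symm (by abel)

end Aux

/-- Let `G` be a left brace with `λ_a(a) = a` for all `a ∈ G`, and let `a, b ∈ G`
commute multiplicatively. Then `2(a+b) = 2(ab)`; in particular, if `a` and `b`
have odd finite multiplicative order, then `a + b = ab`. -/
theorem two_smul_add_eq_two_smul_mul (G : Type*) [AddCommGroup G] [Group G]
    [LeftBrace G] (hsf : ∀ a : G, a * a = a + a) (a b : G) (hab : a * b = b * a) :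
    (2 : ℕ) • (a + b) = (2 : ℕ) • (a * b) ∧
    (Odd (orderOf a) → Odd (orderOf b) → 0 < orderOf a → 0 < orderOf b →
      a + b = a * b) := by
  -- first, the main identity
  have h2 : (a * b) * (a * b) = a * (a * (b * b)) := by
    have hba : b * (a * b) = a * (b * b) := by
      rw [← mul_assoc, ← hab, mul_assoc]
    rw [mul_assoc, hba]
  have hc : a * (b * b) = (b * b) * a := by
    rw [← mul_assoc, hab, mul_assoc, hab, ← mul_assoc]
  have h3 : a * (a * (b * b)) = (b * b) + a + a := lb_key hsf a (b * b) hc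
  have h4 : a * b + a * b = b + b + (a + a) := by
    calc a * b + a * b = (a * b) * (a * b) := (hsf _).symm
    _ = a * (a * (b * b)) := h2
    _ = (b * b) + a + a := h3
    _ = b + b + (a + a) := by rw [hsf b]; abel
  have hmain : (2 : ℕ) • (a + b) = (2 : ℕ) • (a * b) := by
    rw [two_smul, two_smul, h4]; abel
  refine ⟨hmain, ?_⟩
  intro ha hb hpa hpb
  -- powers of 2 act as repeated doubling
  have hpow : ∀ (x : G) (k : ℕ), x ^ (2 ^ k) = (2 ^ k) • x := by
    intro x k
    induction k with
    | zero => simp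
    | succ k ih =>
      rw [pow_succ 2 k, pow_mul, pow_two, hsf, ih, mul_comm, mul_smul, two_smul]
  set n := orderOf a with hn
  set m := orderOf b with hm
  set p := orderOf (a * b) with hp
  have hdvd : p ∣ Nat.lcm n m := Commute.orderOf_mul_dvd_lcm hab
  have hlcm_dvd : Nat.lcm n m ∣ n * m := Nat.lcm_dvd_mul n m
  have hnm_odd : Odd (n * m) := ha.mul hb
  have hp_odd : Odd p := by
    rcases Nat.even_or_odd p with h | h
    · exfalso
      have : (2 : ℕ) ∣ n * m := dvd_trans (dvd_trans h.two_dvd hdvd) hlcm_dvd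
      exact (Nat.not_odd_iff_even.mpr (even_iff_two_dvd.mpr this)) hnm_odd
    · exact h
  have hp_pos : 0 < p := by
    rcases Nat.eq_zero_or_pos p with h | h
    · exfalso
      have : Nat.lcm n m = 0 := Nat.eq_zero_of_zero_dvd (h ▸ hdvd)
      have hlcm_pos : 0 < Nat.lcm n m :=
        Nat.pos_of_ne_zero (Nat.lcm_ne_zero hpa.ne' hpb.ne')
      omega
    · exact h
  set N := n * m * p with hN
  have hN_odd : Odd N := hnm_odd.mul hp_odd
  have hN_pos : 0 < N := by positivity
  have hcop : Nat.Coprime 2 N := by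
    rw [Nat.coprime_two_left]
    exact hN_odd
  set K := Nat.totient N with hK
  have hK_pos : 0 < K := Nat.totient_pos.mpr hN_pos
  have hmod : 2 ^ K ≡ 1 [MOD N] := Nat.ModEq.pow_totient hcop
  have hmodn : 2 ^ K ≡ 1 [MOD n] :=
    hmod.of_dvd (Dvd.dvd.mul_right (Dvd.dvd.mul_right dvd_rfl m) p)
  have hmodm : 2 ^ K ≡ 1 [MOD m] :=
    hmod.of_dvd (Dvd.dvd.mul_right (Dvd.dvd.mul_left dvd_rfl n) p)
  have hmodp : 2 ^ K ≡ 1 [MOD p] := hmod.of_dvd (Dvd.dvd.mul_left dvd_rfl (n * m))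
  have ea : (2 ^ K) • a = a := by
    rw [← hpow a K]
    calc a ^ (2 ^ K) = a ^ 1 := pow_eq_pow_iff_modEq.mpr hmodn
    _ = a := pow_one a
  have eb : (2 ^ K) • b = b := by
    rw [← hpow b K]
    calc b ^ (2 ^ K) = b ^ 1 := pow_eq_pow_iff_modEq.mpr hmodm
    _ = b := pow_one b
  have eab : (2 ^ K) • (a * b) = a * b := by
    rw [← hpow (a * b) K]
    calc (a * b) ^ (2 ^ K) = (a * b) ^ 1 := pow_eq_pow_iff_modEq.mpr hmodp
    _ = a * b := pow_one (a * b)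
  have hd : (2 : ℕ) • (a + b - a * b) = 0 := by
    rw [smul_sub, hmain, sub_self]
  have hdK : (2 ^ K) • (a + b - a * b) = a + b - a * b := by
    rw [smul_sub, smul_add, ea, eb, eab]
  have hzero : (2 ^ K) • (a + b - a * b) = 0 := by
    have hKsplit : 2 ^ K = 2 ^ (K - 1) * 2 := by
      rw [← pow_succ, Nat.sub_add_cancel hK_pos]
    rw [hKsplit, mul_smul, hd, smul_zero]
  have : a + b - a * b = 0 := by rw [← hdK, hzero]
  exact sub_eq_zero.mp this
end
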